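/- arXiv:1212.1496 — 3 statements merged into one kernel-verified Lean document; each statement's English description precedes it below -/
import Mathlib

section
/- Let a, c > 0, b ≥ 1, and let X ≥ 0 be a real random variable such that for all s ≥ 0 and all conjugate exponents p, q > 1 with 1/p+1/q = 1, Pr{X > p·a + s} ≤ b·exp(−s/(c·q)). Then √(E[X]) ≤ √a + √(c(ln b + 1)). -/
open MeasureTheory Set Real

/-- Key step: for any conjugate exponents, `E[X] ≤ p·a + q·c·(ln b + 1)`. -/
lemma expectation_le_of_tail_aux {Ω : Type*} [MeasurableSpace Ω]
    (μ : Measure Ω) [IsProbabilityMeasure μ] (X : Ω → ℝ)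
    (hX : ∀ ω, 0 ≤ X ω) (hint : Integrable X μ)
    (a b c : ℝ) (ha : 0 < a) (hb : 1 ≤ b) (hc : 0 < c)
    (htail : ∀ s : ℝ, 0 ≤ s → ∀ p q : ℝ, 1 < p → 1 < q → 1 / p + 1 / q = 1 →
      μ {ω | p * a + s < X ω} ≤ ENNReal.ofReal (b * Real.exp (-s / (c * q))))
    (p q : ℝ) (hp : 1 < p) (hq : 1 < q) (hpq : 1 / p + 1 / q = 1) :
    ∫ ω, X ω ∂μ ≤ p * a + c * q * (Real.log b + 1) := by
  have hlogb : 0 ≤ Real.log b := Real.log_nonneg hb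
  have hcq : 0 < c * q := mul_pos hc (lt_trans one_pos hq)
  set T : ℝ := p * a + c * q * Real.log b with hT
  have hpa : 0 < p * a := mul_pos (lt_trans one_pos hp) ha
  have hT0 : 0 < T := by positivity
  have hTpa : p * a ≤ T := by nlinarith
  -- layer cake
  have hXm : AEMeasurable X μ := hint.aemeasurable
  have layer : ∫⁻ ω, ENNReal.ofReal (X ω) ∂μ = ∫⁻ t in Ioi 0, μ {ω | t < X ω} := by
    exact lintegral_eq_lintegral_meas_lt μ (Filter.Eventually.of_forall hX) hXm
  -- split the domain
  have hsplit : (Ioi (0:ℝ)) = Ioc 0 T ∪ Ioi T := (Ioc_union_Ioi_eq_Ioi hT0.le).symm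
  have hdisj : Disjoint (Ioc (0:ℝ) T) (Ioi T) := Ioc_disjoint_Ioi le_rfl
  have hsum : ∫⁻ t in Ioi 0, μ {ω | t < X ω}
      = (∫⁻ t in Ioc 0 T, μ {ω | t < X ω}) + ∫⁻ t in Ioi T, μ {ω | t < X ω} := by
    rw [hsplit, lintegral_union measurableSet_Ioi hdisj]
  -- bound on [0, T]
  have hbound1 : ∫⁻ t in Ioc 0 T, μ {ω | t < X ω} ≤ ENNReal.ofReal T := by
    calc ∫⁻ t in Ioc 0 T, μ {ω | t < X ω} ≤ ∫⁻ _ in Ioc 0 T, 1 :=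
          lintegral_mono fun t => prob_le_one
      _ = ENNReal.ofReal T := by
          simp [Real.volume_Ioc, hT0.le]
  -- bound on (T, ∞)
  have hbound2 : ∫⁻ t in Ioi T, μ {ω | t < X ω}
      ≤ ∫⁻ t in Ioi T, ENNReal.ofReal (b * Real.exp (-(t - p * a) / (c * q))) := by
    refine setLIntegral_mono' measurableSet_Ioi fun t ht => ?_
    have hs : 0 ≤ t - p * a := by
      have := ht.out
      linarith [hTpa]
    have := htail (t - p * a) hs p q hp hq hpq
    simpa [add_sub_cancel] using this
  -- the exponential integral
  have hexp_int : IntegrableOn (fun t : ℝ => b * Real.exp (-(t - p * a) / (c * q))) (Ioi T) := by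
    have h1 : IntegrableOn (fun t : ℝ => Real.exp (-(1 / (c * q)) * t)) (Ioi T) :=
      exp_neg_integrableOn_Ioi T (by positivity)
    have h2 : IntegrableOn (fun t : ℝ =>
        (b * Real.exp (p * a / (c * q))) * Real.exp (-(1 / (c * q)) * t)) (Ioi T) :=
      h1.const_mul _
    refine h2.congr_fun (fun t _ => ?_) measurableSet_Ioi
    beta_reduce
    rw [mul_assoc, ← Real.exp_add]
    congr 1
    field_simp
    ring
  have hexp_val : ∫ t in Ioi T, b * Real.exp (-(t - p * a) / (c * q)) = c * q := by
    have key := integral_Ioi_of_hasDerivAt_of_tendsto (f := fun t : ℝ =>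
        -(c * q) * (b * Real.exp (-(t - p * a) / (c * q))))
        (f' := fun t : ℝ => b * Real.exp (-(t - p * a) / (c * q))) (a := T)
        (m := 0) ?_ ?_ hexp_int ?_
    · rw [key]
      have : Real.exp (-(T - p * a) / (c * q)) = 1 / b := by
        have : -(T - p * a) / (c * q) = -Real.log b := by
          rw [hT]; field_simp; ring
        rw [this, Real.exp_neg, Real.exp_log (lt_of_lt_of_le one_pos hb)]
        exact (one_div b).symm
      show (0:ℝ) - (-(c * q) * (b * Real.exp (-(T - p * a) / (c * q)))) = c * q
      rw [this]
      field_simp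
      ring
    · exact (by fun_prop : Continuous fun t : ℝ =>
        -(c * q) * (b * Real.exp (-(t - p * a) / (c * q)))).continuousWithinAt
    · intro x _
      have hd : HasDerivAt (fun t : ℝ => -(t - p * a) / (c * q)) (-(1 / (c * q))) x := by
        have : HasDerivAt (fun t : ℝ => -(t - p * a) / (c * q)) (-1 / (c * q)) x := by
          simpa using (((hasDerivAt_id x).sub_const (p * a)).neg.div_const (c * q))
        simpa [neg_div] using this
      have := ((hd.exp.const_mul b).const_mul (-(c * q)))
      refine this.congr_deriv ?_
      rw [show -(c * q) * (b * (Real.exp (-(x - p * a) / (c * q)) * -(1 / (c * q))))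
          = b * Real.exp (-(x - p * a) / (c * q)) * ((c * q) * (1 / (c * q))) by ring,
        mul_one_div_cancel hcq.ne', mul_one]
      try ring
    · have : Filter.Tendsto (fun t : ℝ => -(t - p * a) / (c * q)) Filter.atTop Filter.atBot := by
        apply Filter.Tendsto.atBot_div_const hcq
        exact Filter.tendsto_neg_atBot_iff.mpr (Filter.tendsto_atTop_add_const_right _ _ Filter.tendsto_id)
      have h2 := Real.tendsto_exp_atBot.comp this
      have h3 := (h2.const_mul b).const_mul (-(c * q))
      simpa using h3
  have hexp_nn : 0 ≤ᵐ[volume.restrict (Ioi T)]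
      fun t : ℝ => b * Real.exp (-(t - p * a) / (c * q)) :=
    Filter.Eventually.of_forall fun t => by positivity
  have hbound2' : ∫⁻ t in Ioi T, ENNReal.ofReal (b * Real.exp (-(t - p * a) / (c * q)))
      = ENNReal.ofReal (c * q) := by
    rw [← ofReal_integral_eq_lintegral_ofReal hexp_int hexp_nn, hexp_val]
  -- put it together
  have htotal : ∫⁻ ω, ENNReal.ofReal (X ω) ∂μ ≤ ENNReal.ofReal (T + c * q) := by
    rw [layer, hsum, ENNReal.ofReal_add hT0.le hcq.le]
    exact add_le_add hbound1 (hbound2.trans_eq hbound2')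
  have hint_eq : ∫ ω, X ω ∂μ = (∫⁻ ω, ENNReal.ofReal (X ω) ∂μ).toReal := by
    rw [integral_eq_lintegral_of_nonneg_ae (Filter.Eventually.of_forall hX)
      hint.aestronglyMeasurable]
  rw [hint_eq]
  have hne : (∫⁻ ω, ENNReal.ofReal (X ω) ∂μ) ≠ ⊤ :=
    lt_of_le_of_lt htotal ENNReal.ofReal_lt_top |>.ne
  have := ENNReal.toReal_mono ENNReal.ofReal_ne_top htotal
  rw [ENNReal.toReal_ofReal (by positivity)] at this
  calc (∫⁻ ω, ENNReal.ofReal (X ω) ∂μ).toReal ≤ T + c * q := this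
    _ = p * a + c * q * (Real.log b + 1) := by rw [hT]; ring

/-- Let `a, c > 0`, `b ≥ 1`, and let `X ≥ 0` be a real random variable such that
for all `s ≥ 0` and all conjugate exponents `p, q > 1` with `1/p + 1/q = 1`,
`Pr{X > p·a + s} ≤ b·exp(−s/(c·q))`.  Then `√(E[X]) ≤ √a + √(c(ln b + 1))`. -/
theorem sqrt_expectation_le_of_tail {Ω : Type*} [MeasurableSpace Ω]
    (μ : Measure Ω) [IsProbabilityMeasure μ] (X : Ω → ℝ)
    (hX : ∀ ω, 0 ≤ X ω) (hint : Integrable X μ)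
    (a b c : ℝ) (ha : 0 < a) (hb : 1 ≤ b) (hc : 0 < c)
    (htail : ∀ s : ℝ, 0 ≤ s → ∀ p q : ℝ, 1 < p → 1 < q → 1 / p + 1 / q = 1 →
      μ {ω | p * a + s < X ω} ≤ ENNReal.ofReal (b * Real.exp (-s / (c * q)))) :
    Real.sqrt (∫ ω, X ω ∂μ) ≤ Real.sqrt a + Real.sqrt (c * (Real.log b + 1)) := by
  set L : ℝ := c * (Real.log b + 1) with hLdef
  have hlogb : 0 ≤ Real.log b := Real.log_nonneg hb
  have hL : 0 < L := by positivity
  set sa : ℝ := Real.sqrt a with hsa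
  set sL : ℝ := Real.sqrt L with hsL
  have hsa0 : 0 < sa := Real.sqrt_pos.mpr ha
  have hsL0 : 0 < sL := Real.sqrt_pos.mpr hL
  have hsa2 : sa ^ 2 = a := Real.sq_sqrt ha.le
  have hsL2 : sL ^ 2 = L := Real.sq_sqrt hL.le
  set p : ℝ := 1 + sL / sa with hpdef
  set q : ℝ := 1 + sa / sL with hqdef
  have hp : 1 < p := by
    have : 0 < sL / sa := div_pos hsL0 hsa0
    rw [hpdef]; linarith
  have hq : 1 < q := by
    have : 0 < sa / sL := div_pos hsa0 hsL0
    rw [hqdef]; linarith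
  have hpq : 1 / p + 1 / q = 1 := by
    rw [hpdef, hqdef]
    field_simp
    ring
  have key := expectation_le_of_tail_aux μ X hX hint a b c ha hb hc htail p q hp hq hpq
  have halg : p * a + c * q * (Real.log b + 1) = (sa + sL) ^ 2 := by
    have : c * q * (Real.log b + 1) = q * L := by rw [hLdef]; ring
    rw [this, hpdef, hqdef, ← hsa2, ← hsL2]
    field_simp
    ring
  rw [halg] at key
  calc Real.sqrt (∫ ω, X ω ∂μ) ≤ Real.sqrt ((sa + sL) ^ 2) := Real.sqrt_le_sqrt key
    _ = sa + sL := by rw [Real.sqrt_sq (by positivity)]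
end

section
/- Let A be a random positive semidefinite operator satisfying the subexponential moment condition E[A^m] ⪯ m! R^{m−1} E[A] for all m ∈ ℕ and some R ≥ 0. Then for any θ with 0 ≤ θ < 1/R, E[e^{θA}] ⪯ exp( (θ/(1 − Rθ)) · E[A] ). -/
open MeasureTheory

set_option maxHeartbeats 1000000
set_option synthInstance.maxHeartbeats 400000

section AuxExpLoewner

variable {E : Type*} [NormedAddCommGroup E] [InnerProductSpace ℝ E] [CompleteSpace E]

local notation "⟪" x ", " y "⟫" => @inner ℝ _ _ x y

/-- quadratic form `T ↦ ⟪x, T x⟫` as a continuous linear functional. -/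
noncomputable def qform (x : E) : (E →L[ℝ] E) →L[ℝ] ℝ :=
  (innerSL ℝ x).comp (ContinuousLinearMap.apply ℝ E x)

@[simp] lemma qform_apply (x : E) (T : E →L[ℝ] E) : qform x T = ⟪x, T x⟫ := rfl

lemma isPositive_pow {T : E →L[ℝ] E} (hT : T.IsPositive) : ∀ n, (T ^ n).IsPositive := by
  intro n
  induction n using Nat.strong_induction_on with
  | _ n ih =>
    match n with
    | 0 => simpa using ContinuousLinearMap.isPositive_one
    | 1 => simpa using hT
    | (m+2) =>
      have h := ((ih m (by omega)).adjoint_conj T)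
      have he : ContinuousLinearMap.adjoint T ∘L (T ^ m) ∘L T = T ^ (m + 2) := by
        rw [← ContinuousLinearMap.star_eq_adjoint, hT.isSelfAdjoint]
        show T * (T ^ m * T) = T ^ (m + 2)
        rw [pow_succ, pow_succ', mul_assoc]
      rwa [he] at h

lemma inner_pos_nonneg {T : E →L[ℝ] E} (hT : T.IsPositive) (x : E) : 0 ≤ ⟪x, T x⟫ := by
  simpa using hT.inner_nonneg_right x

lemma isSelfAdjoint_smul_real {T : E →L[ℝ] E} (h : IsSelfAdjoint T) (c : ℝ) :
    IsSelfAdjoint (c • T) := by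
  rw [IsSelfAdjoint, star_smul, star_trivial, h.star_eq]

lemma isPositive_smul {T : E →L[ℝ] E} (hT : T.IsPositive) {c : ℝ} (hc : 0 ≤ c) :
    (c • T).IsPositive := by
  refine ⟨ContinuousLinearMap.isSelfAdjoint_iff_isSymmetric.mp (isSelfAdjoint_smul_real hT.isSelfAdjoint c), fun y => ?_⟩
  rw [ContinuousLinearMap.reApplyInnerSelf_apply]
  simp only [ContinuousLinearMap.smul_apply, real_inner_smul_left, RCLike.re_to_real]
  exact mul_nonneg hc (by simpa using hT.inner_nonneg_left y)

variable {Ω : Type*} [MeasurableSpace Ω] {μ : Measure Ω}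

lemma integral_isSelfAdjoint {f : Ω → E →L[ℝ] E} (hf : Integrable f μ)
    (h : ∀ ω, IsSelfAdjoint (f ω)) : IsSelfAdjoint (∫ ω, f ω ∂μ) := by
  rw [ContinuousLinearMap.isSelfAdjoint_iff_isSymmetric]
  intro x y
  have hx : Integrable (fun ω => f ω x) μ :=
    (ContinuousLinearMap.apply ℝ E x).integrable_comp hf
  have hy : Integrable (fun ω => f ω y) μ :=
    (ContinuousLinearMap.apply ℝ E y).integrable_comp hf
  calc ⟪(∫ ω, f ω ∂μ) x, y⟫ = ⟪y, (∫ ω, f ω ∂μ) x⟫ := real_inner_comm _ _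
    _ = ∫ ω, ⟪y, f ω x⟫ ∂μ := by rw [ContinuousLinearMap.integral_apply hf, integral_inner hx]
    _ = ∫ ω, ⟪x, f ω y⟫ ∂μ := by
        refine integral_congr_ae (Filter.Eventually.of_forall fun ω => ?_)
        show ⟪y, f ω x⟫ = ⟪x, f ω y⟫
        rw [real_inner_comm]
        exact ((ContinuousLinearMap.isSelfAdjoint_iff_isSymmetric.mp (h ω)) x y)
    _ = ⟪x, (∫ ω, f ω ∂μ) y⟫ := by rw [ContinuousLinearMap.integral_apply hf, integral_inner hy]

lemma integral_isPositive {f : Ω → E →L[ℝ] E} (hf : Integrable f μ)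
    (h : ∀ ω, (f ω).IsPositive) : (∫ ω, f ω ∂μ).IsPositive := by
  refine ⟨ContinuousLinearMap.isSelfAdjoint_iff_isSymmetric.mp (integral_isSelfAdjoint hf fun ω => (h ω).isSelfAdjoint), fun x => ?_⟩
  rw [ContinuousLinearMap.reApplyInnerSelf_apply]
  simp only [RCLike.re_to_real]
  rw [real_inner_comm]
  have : ⟪x, (∫ ω, f ω ∂μ) x⟫ = ∫ ω, ⟪x, f ω x⟫ ∂μ :=
    ((qform x).integral_comp_comm hf).symm
  rw [this]
  exact integral_nonneg fun ω => inner_pos_nonneg (h ω) x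

lemma inner_exp_eq (B : E →L[ℝ] E) (x : E) :
    ⟪x, NormedSpace.exp B x⟫ = ∑' n : ℕ, ((n.factorial : ℝ)⁻¹) * ⟪x, (B ^ n) x⟫ := by
  have hs := NormedSpace.expSeries_summable' (𝕂 := ℝ) B
  have : qform x (NormedSpace.exp B) = ∑' n : ℕ, qform x (((n.factorial : ℝ)⁻¹) • B ^ n) := by
    rw [NormedSpace.exp_eq_tsum (𝕂 := ℝ)]
    exact (qform x).map_tsum hs
  simpa [inner_smul_right] using this

lemma summable_inner_exp (B : E →L[ℝ] E) (x : E) :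
    Summable fun n : ℕ => ((n.factorial : ℝ)⁻¹) * ⟪x, (B ^ n) x⟫ := by
  have hs := NormedSpace.expSeries_summable' (𝕂 := ℝ) B
  have := hs.map (qform x).toLinearMap.toAddMonoidHom (qform x).continuous
  refine this.congr fun n => ?_
  simp [inner_smul_right]

end AuxExpLoewner

/-- Let `A` be a random positive semidefinite operator satisfying the subexponential
moment condition `E[A^m] ⪯ m! R^{m−1} E[A]` for all `m ≥ 1` and some `R ≥ 0`.  Then for
any `θ` with `0 ≤ θ` and `R·θ < 1` (i.e. `θ < 1/R`),
`E[exp (θ A)] ⪯ exp ((θ/(1 − Rθ)) • E[A])` in the Loewner order. -/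
theorem expectation_exp_loewner_le {E : Type*} [NormedAddCommGroup E]
    [InnerProductSpace ℝ E] [CompleteSpace E]
    {Ω : Type*} [MeasurableSpace Ω] (μ : Measure Ω) [IsProbabilityMeasure μ]
    (A : Ω → (E →L[ℝ] E)) (hpos : ∀ ω, (A ω).IsPositive)
    (R θ : ℝ) (hR : 0 ≤ R) (hθ : 0 ≤ θ) (hθR : R * θ < 1)
    (hintm : ∀ m : ℕ, Integrable (fun ω => (A ω) ^ m) μ)
    (hintexp : Integrable (fun ω => NormedSpace.exp (θ • A ω)) μ)
    (hmom : ∀ m : ℕ, 1 ≤ m →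
      (((m.factorial : ℝ) * R ^ (m - 1)) • (∫ ω, A ω ∂μ)
        - ∫ ω, (A ω) ^ m ∂μ).IsPositive) :
    (NormedSpace.exp ((θ / (1 - R * θ)) • ∫ ω, A ω ∂μ)
      - ∫ ω, NormedSpace.exp (θ • A ω) ∂μ).IsPositive := by
  set M := ∫ ω, A ω ∂μ with hMdef
  have hRθ0 : 0 ≤ R * θ := mul_nonneg hR hθ
  have h1 : 0 < 1 - R * θ := by linarith
  set c := θ / (1 - R * θ) with hcdef
  have hc : 0 ≤ c := div_nonneg hθ h1.le
  have hintA : Integrable A μ := by simpa using hintm 1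
  have hMpos : M.IsPositive := integral_isPositive hintA hpos
  have hcMpos : (c • M).IsPositive := isPositive_smul hMpos hc
  have hexpsa : ∀ ω, IsSelfAdjoint (NormedSpace.exp (θ • A ω)) := fun ω =>
    (isSelfAdjoint_smul_real (hpos ω).isSelfAdjoint θ).exp
  refine ⟨ContinuousLinearMap.isSelfAdjoint_iff_isSymmetric.mp ((hcMpos.isSelfAdjoint.exp).sub (integral_isSelfAdjoint hintexp hexpsa)), fun x => ?_⟩
  rw [ContinuousLinearMap.reApplyInnerSelf_apply]
  simp only [RCLike.re_to_real, ContinuousLinearMap.sub_apply, inner_sub_left]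
  rw [sub_nonneg]
  -- pointwise series expansion
  set g : ℕ → Ω → ℝ := fun m ω => ((m.factorial : ℝ)⁻¹ * θ ^ m) * inner ℝ x (((A ω) ^ m) x)
    with hgdef
  have hpt : ∀ ω, (inner ℝ x (NormedSpace.exp (θ • A ω) x) : ℝ) = ∑' m, g m ω := by
    intro ω
    rw [inner_exp_eq]
    exact tsum_congr fun n => by
      simp [hgdef, smul_pow, inner_smul_right, mul_assoc]
  have hg0 : ∀ m ω, 0 ≤ g m ω := fun m ω =>
    mul_nonneg (mul_nonneg (by positivity) (pow_nonneg hθ m))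
      (inner_pos_nonneg (isPositive_pow (hpos ω) m) x)
  have hgint : ∀ m, Integrable (g m) μ := fun m =>
    ((qform x).integrable_comp (hintm m)).const_mul _
  have hI : ∀ m, ∫ ω, g m ω ∂μ
      = ((m.factorial : ℝ)⁻¹ * θ ^ m) * inner ℝ x ((∫ ω, (A ω) ^ m ∂μ) x) := by
    intro m
    rw [hgdef, integral_const_mul]
    congr 1
    exact (qform x).integral_comp_comm (hintm m)
  have hI0 : ∫ ω, g 0 ω ∂μ = (inner ℝ x x : ℝ) := by
    simp [hgdef]
  have hIb : ∀ m : ℕ, ∫ ω, g (m+1) ω ∂μ ≤ θ ^ (m+1) * R ^ m * inner ℝ x (M x) := by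
    intro m
    have hmom' := inner_pos_nonneg (hmom (m+1) (by omega)) x
    simp only [Nat.add_sub_cancel, ContinuousLinearMap.sub_apply, inner_sub_right,
      ContinuousLinearMap.smul_apply, inner_smul_right, sub_nonneg] at hmom'
    have hfac : (0:ℝ) < ((m+1).factorial : ℝ) := by
      exact_mod_cast Nat.factorial_pos (m+1)
    rw [hI (m+1)]
    calc (((m+1).factorial : ℝ)⁻¹ * θ ^ (m+1)) * inner ℝ x ((∫ ω, (A ω) ^ (m+1) ∂μ) x)
        ≤ (((m+1).factorial : ℝ)⁻¹ * θ ^ (m+1))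
            * (((m+1).factorial : ℝ) * R ^ m * inner ℝ x (M x)) := by
          refine mul_le_mul_of_nonneg_left ?_ (by positivity)
          calc (inner ℝ x ((∫ ω, (A ω) ^ (m+1) ∂μ) x) : ℝ)
              ≤ ((m+1).factorial : ℝ) * R ^ m • inner ℝ x (M x) := by
                simpa [mul_assoc] using hmom'
            _ = ((m+1).factorial : ℝ) * R ^ m * inner ℝ x (M x) := by
                simp [smul_eq_mul, mul_assoc]
      _ = θ ^ (m+1) * R ^ m * inner ℝ x (M x) := by
          field_simp
  have hgeo : Summable (fun m : ℕ => θ ^ (m+1) * R ^ m * (inner ℝ x (M x) : ℝ)) := by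
    have he : (fun m : ℕ => θ ^ (m+1) * R ^ m * (inner ℝ x (M x) : ℝ))
        = fun m => (θ * inner ℝ x (M x)) * (R * θ) ^ m := by
      funext m
      rw [mul_pow, pow_succ]
      ring
    rw [he]
    exact (summable_geometric_of_lt_one hRθ0 hθR).mul_left _
  have hshift : Summable (fun m : ℕ => ∫ ω, g (m+1) ω ∂μ) :=
    Summable.of_nonneg_of_le (fun m => integral_nonneg (hg0 _)) hIb hgeo
  have hsumI : Summable (fun m : ℕ => ∫ ω, g m ω ∂μ) := (summable_nat_add_iff 1).mp hshift
  have heach : ∀ m, ∫⁻ ω, ‖g m ω‖ₑ ∂μ = ENNReal.ofReal (∫ ω, g m ω ∂μ) := by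
    intro m
    rw [lintegral_congr (fun ω => Real.enorm_eq_ofReal (hg0 m ω)),
      ← ofReal_integral_eq_lintegral_ofReal (hgint m) (Filter.Eventually.of_forall (hg0 m))]
  have hfin : ∑' m, ∫⁻ ω, ‖g m ω‖ₑ ∂μ ≠ ⊤ := by
    rw [tsum_congr heach,
      ← ENNReal.ofReal_tsum_of_nonneg (fun m => integral_nonneg (hg0 m)) hsumI]
    exact ENNReal.ofReal_ne_top
  have hswap : ∫ ω, (∑' m, g m ω) ∂μ = ∑' m, ∫ ω, g m ω ∂μ :=
    integral_tsum (fun m => (hgint m).aestronglyMeasurable) hfin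
  -- geometric sum value
  have hgeoval : ∑' m : ℕ, θ ^ (m+1) * R ^ m * (inner ℝ x (M x) : ℝ) = c * inner ℝ x (M x) := by
    have he : (fun m : ℕ => θ ^ (m+1) * R ^ m * (inner ℝ x (M x) : ℝ))
        = fun m => (θ * inner ℝ x (M x)) * (R * θ) ^ m := by
      funext m
      rw [mul_pow, pow_succ]
      ring
    rw [he, tsum_mul_left, tsum_geometric_of_lt_one hRθ0 hθR, hcdef]
    field_simp
    try ring
  -- upper bound on LHS
  have hLle : (inner ℝ x ((∫ ω, NormedSpace.exp (θ • A ω) ∂μ) x) : ℝ)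
      ≤ inner ℝ x x + c * inner ℝ x (M x) := by
    have hL : (inner ℝ x ((∫ ω, NormedSpace.exp (θ • A ω) ∂μ) x) : ℝ)
        = ∫ ω, (inner ℝ x (NormedSpace.exp (θ • A ω) x) : ℝ) ∂μ :=
      ((qform x).integral_comp_comm hintexp).symm
    rw [hL, integral_congr_ae (Filter.Eventually.of_forall hpt), hswap,
      Summable.tsum_eq_zero_add hsumI, hI0]
    have hle2 : ∑' m, ∫ ω, g (m+1) ω ∂μ
        ≤ ∑' m : ℕ, θ ^ (m+1) * R ^ m * (inner ℝ x (M x) : ℝ) :=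
      Summable.tsum_le_tsum hIb hshift hgeo
    rw [hgeoval] at hle2
    linarith
  -- lower bound on RHS
  have hRle : (inner ℝ x x : ℝ) + c * inner ℝ x (M x)
      ≤ inner ℝ x (NormedSpace.exp (c • M) x) := by
    rw [inner_exp_eq]
    have hsummable := summable_inner_exp (c • M) x
    have h2 := Summable.sum_le_tsum (Finset.range 2)
      (fun n _ => mul_nonneg (by positivity)
        (inner_pos_nonneg (isPositive_pow hcMpos n) x)) hsummable
    refine le_trans (le_of_eq ?_) h2
    rw [Finset.sum_range_succ, Finset.sum_range_one]
    simp [inner_smul_right]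
  calc (inner ℝ ((∫ ω, NormedSpace.exp (θ • A ω) ∂μ) x) x : ℝ)
      = inner ℝ x ((∫ ω, NormedSpace.exp (θ • A ω) ∂μ) x) := real_inner_comm _ _
    _ ≤ inner ℝ x x + c * inner ℝ x (M x) := hLle
    _ ≤ inner ℝ x (NormedSpace.exp (c • M) x) := hRle
    _ = inner ℝ (NormedSpace.exp (c • M) x) x := real_inner_comm _ _
end

section
/- Let K_{m,n} be the set of sequences (j_1, …, j_{2m}) with entries in {1,…,n} such that each integer in {1,…,n} occurs an even number of times. Then |K_{m,n}| ≤ (2m−1)!! · n^m, where (2m−1)!! = ∏_{i=1}^m (2i−1). -/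
open Finset

private def emb (m : ℕ) (q : Fin (2*m+1)) (k : Fin (2*m)) : Fin (2*m+2) :=
  (q.succAbove k).succ

private lemma emb_injective (m : ℕ) (q : Fin (2*m+1)) : Function.Injective (emb m q) :=
  fun a b h => Fin.succAbove_right_injective (Fin.succ_injective _ h)

private lemma emb_ne_zero (m : ℕ) (q : Fin (2*m+1)) (k : Fin (2*m)) : emb m q k ≠ 0 :=
  Fin.succ_ne_zero _

private lemma emb_ne (m : ℕ) (q : Fin (2*m+1)) (k : Fin (2*m)) : emb m q k ≠ q.succ :=
  fun h => Fin.succAbove_ne q k (Fin.succ_injective _ h)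

private lemma exists_q (m n : ℕ) (j : Fin (2*m+2) → Fin n)
    (hj : ∀ v, Even ((univ.filter (fun i => j i = v)).card)) :
    ∃ q : Fin (2*m+1), j q.succ = j 0 := by
  have h0 : (0 : Fin (2*m+2)) ∈ univ.filter (fun i => j i = j 0) := by simp
  have hpos : 0 < (univ.filter (fun i => j i = j 0)).card := card_pos.mpr ⟨0, h0⟩
  have hcard : 1 < (univ.filter (fun i => j i = j 0)).card := by
    rcases hj (j 0) with ⟨r, hr⟩
    omega
  obtain ⟨p, hp, hpne⟩ := Finset.exists_mem_ne hcard 0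
  refine ⟨p.pred hpne, ?_⟩
  simpa [Fin.succ_pred] using (mem_filter.mp hp).2

private lemma reduced_mem (m n : ℕ) (j : Fin (2*m+2) → Fin n)
    (hj : ∀ v, Even ((univ.filter (fun i => j i = v)).card))
    (q : Fin (2*m+1)) (hq : j q.succ = j 0) (v : Fin n) :
    Even ((univ.filter (fun k : Fin (2*m) => j (emb m q k) = v)).card) := by
  classical
  set T : Finset (Fin (2*m+2)) := univ.filter (fun i => j i = v) with hT
  have himg : T.filter (fun i => ¬(i = 0 ∨ i = q.succ)) =
      (univ.filter (fun k : Fin (2*m) => j (emb m q k) = v)).image (emb m q) := by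
    ext i
    simp only [mem_filter, mem_image, mem_univ, true_and, hT, not_or]
    constructor
    · rintro ⟨hiv, hi0, hiq⟩
      obtain ⟨i', hi'⟩ := Fin.exists_succ_eq.mpr hi0
      have hi'q : i' ≠ q := fun h => hiq (by rw [← hi', h])
      obtain ⟨k, hk⟩ := Fin.exists_succAbove_eq hi'q
      exact ⟨k, by simp [emb, hk, hi', hiv], by simp [emb, hk, hi']⟩
    · rintro ⟨k, hk, rfl⟩
      exact ⟨hk, emb_ne_zero m q k, emb_ne m q k⟩
  have hsplit := Finset.card_filter_add_card_filter_not
    (s := T) (p := fun i => i = 0 ∨ i = q.succ)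
  have hcardimg : (T.filter (fun i => ¬(i = 0 ∨ i = q.succ))).card =
      (univ.filter (fun k : Fin (2*m) => j (emb m q k) = v)).card := by
    rw [himg, Finset.card_image_of_injective _ (emb_injective m q)]
  have hTeven : Even T.card := hj v
  by_cases hv : v = j 0
  · have h2 : T.filter (fun i => i = 0 ∨ i = q.succ) = {0, q.succ} := by
      ext i
      simp only [mem_filter, mem_insert, mem_singleton, hT, mem_univ, true_and]
      constructor
      · rintro ⟨_, h⟩; exact h
      · rintro (rfl | rfl)
        · exact ⟨by simp [hv], Or.inl rfl⟩
        · exact ⟨by simp [hq, hv], Or.inr rfl⟩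
    have hc2 : (T.filter (fun i => i = 0 ∨ i = q.succ)).card = 2 := by
      rw [h2, Finset.card_insert_of_notMem (by simp [(Fin.succ_ne_zero q).symm]),
        Finset.card_singleton]
    rw [hc2, hcardimg] at hsplit
    rcases hTeven with ⟨r, hr⟩
    exact ⟨r - 1, by omega⟩
  · have h0 : T.filter (fun i => i = 0 ∨ i = q.succ) = ∅ := by
      ext i
      simp only [mem_filter, hT, mem_univ, true_and, Finset.notMem_empty, iff_false, not_and]
      rintro hiv (rfl | rfl)
      · exact hv hiv.symm
      · exact hv (hiv ▸ hq ▸ rfl : v = j 0)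
    rw [h0, Finset.card_empty, hcardimg] at hsplit
    rw [← hsplit] at hTeven
    simpa using hTeven

private lemma aux (n : ℕ) : ∀ m : ℕ,
    Nat.card {j : Fin (2 * m) → Fin n //
        ∀ v : Fin n, Even ((Finset.univ.filter (fun i => j i = v)).card)} ≤
      (∏ i ∈ Finset.range m, (2 * i + 1)) * n ^ m := by
  intro m
  induction m with
  | zero =>
    simp only [Finset.range_zero, Finset.prod_empty, pow_zero, mul_one]
    have : Subsingleton {j : Fin (2 * 0) → Fin n //
        ∀ v : Fin n, Even ((Finset.univ.filter (fun i => j i = v)).card)} := by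
      constructor
      intro a b
      apply Subtype.ext
      funext i
      exact absurd i.2 (by omega)
    have h := Nat.card_le_card_of_injective (α := {j : Fin (2 * 0) → Fin n //
        ∀ v : Fin n, Even ((Finset.univ.filter (fun i => j i = v)).card)}) (β := Fin 1)
      (fun _ => 0) (fun a b _ => Subsingleton.elim a b)
    simpa using h
  | succ m ih =>
    classical
    set K1 := {j : Fin (2 * (m+1)) → Fin n //
        ∀ v : Fin n, Even ((Finset.univ.filter (fun i => j i = v)).card)}
    set K0 := {j : Fin (2 * m) → Fin n //
        ∀ v : Fin n, Even ((Finset.univ.filter (fun i => j i = v)).card)}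
    have hex : ∀ j : K1, ∃ q : Fin (2*m+1), j.1 q.succ = j.1 0 := fun j =>
      exists_q m n j.1 j.2
    let Φ : K1 → Fin n × Fin (2*m+1) × K0 := fun j =>
      ⟨j.1 0, Classical.choose (hex j),
        ⟨fun k => j.1 (emb m (Classical.choose (hex j)) k),
          reduced_mem m n j.1 j.2 _ (Classical.choose_spec (hex j))⟩⟩
    have hΦ : Function.Injective Φ := by
      intro a b hab
      obtain ⟨h0, h1, h2⟩ : a.1 0 = b.1 0 ∧ Classical.choose (hex a) = Classical.choose (hex b) ∧
          (fun k => a.1 (emb m (Classical.choose (hex a)) k)) =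
          (fun k => b.1 (emb m (Classical.choose (hex b)) k)) := by
        have e1 := congrArg Prod.fst hab
        have e2 := congrArg (fun x => x.2.1) hab
        have e3 := congrArg (fun x => x.2.2.1) hab
        exact ⟨e1, e2, e3⟩
      set q := Classical.choose (hex a) with hqdef
      apply Subtype.ext
      funext i
      by_cases hi0 : i = 0
      · rw [hi0]; exact h0
      · by_cases hiq : i = q.succ
        · rw [hiq]
          calc a.1 q.succ = a.1 0 := Classical.choose_spec (hex a)
            _ = b.1 0 := h0
            _ = b.1 q.succ := by
                rw [show (q : Fin (2*m+1)) = Classical.choose (hex b) from h1]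
                exact (Classical.choose_spec (hex b)).symm
        · obtain ⟨i', hi'⟩ := Fin.exists_succ_eq.mpr hi0
          have hi'q : i' ≠ q := fun h => hiq (by rw [← hi', h])
          obtain ⟨k, hk⟩ := Fin.exists_succAbove_eq hi'q
          have : emb m q k = i := by simp [emb, hk, hi']
          rw [← this]
          have := congrFun h2 k
          simpa [← h1] using this
    calc Nat.card K1 ≤ Nat.card (Fin n × Fin (2*m+1) × K0) :=
          Nat.card_le_card_of_injective Φ hΦ
      _ = n * ((2*m+1) * Nat.card K0) := by
          simp [Nat.card_prod, Nat.card_eq_fintype_card, mul_assoc]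
      _ ≤ n * ((2*m+1) * ((∏ i ∈ Finset.range m, (2 * i + 1)) * n ^ m)) := by
          gcongr
      _ = (∏ i ∈ Finset.range (m+1), (2 * i + 1)) * n ^ (m+1) := by
          rw [Finset.prod_range_succ]
          ring

/-- Let `K_{m,n}` be the set of sequences `(j_1, …, j_{2m})` with entries in `{1,…,n}`
such that each value occurs an even number of times.  Then
`|K_{m,n}| ≤ (2m−1)!! · n^m`, where `(2m−1)!! = ∏_{i=1}^m (2i−1)`. -/
theorem card_even_occurrence_sequences_le (m n : ℕ) (hm : 0 < m) (hn : 0 < n) :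
    Nat.card {j : Fin (2 * m) → Fin n //
        ∀ v : Fin n, Even (Finset.univ.filter (fun i => j i = v)).card} ≤
      (∏ i ∈ Finset.range m, (2 * i + 1)) * n ^ m := by
  exact aux n m
end
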